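/- Properties of the centering operator: for every (Y,p) ∈ L⁰ × ℤ, writing (X,p') = J(Y,p): (i) inf supp(X⁻) = inf supp(Y⁻) − [p,p'] and sup supp(X⁺) = sup supp(Y⁺) − [p,p']; (ii) inf supp(X⁻) + sup supp(X⁺) + 2⌈p'/2⌉ = inf supp(Y⁻) + sup supp(Y⁺) + 2⌈p/2⌉. -/

import Mathlib

open scoped BigOperators

namespace COB

/-- Vectors of queue sizes indexed by prices in `I = {−d',…,d'}` (functions `ℤ → ℕ`
vanishing outside `I`; the support condition is part of membership in `Em`). -/
abbrev VecC := ℤ → ℕ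

/-- Pairs (buy side, sell side). -/
abbrev EC := VecC × VecC

/-- A vector is supported in `{−d',…,d'}`. -/
def suppIn (d' : ℕ) (Z : VecC) : Prop :=
  ∀ j : ℤ, Z j ≠ 0 → -(d' : ℤ) ≤ j ∧ j ≤ (d' : ℤ)

/-- Price support of a vector, inside `I = {−d',…,d'}`. -/
noncomputable def suppC (d' : ℕ) (Z : VecC) : Finset ℤ :=
  (Finset.Icc (-(d' : ℤ)) (d' : ℤ)).filter fun j => 0 < Z j

/-- `sup` of a finite set of prices, with the convention `sup ∅ = −d'`. -/
def supD (d' : ℕ) (S : Finset ℤ) : ℤ := if h : S.Nonempty then S.max' h else -(d' : ℤ)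

/-- `inf` of a finite set of prices, with the convention `inf ∅ = d'`. -/
def infD (d' : ℕ) (S : Finset ℤ) : ℤ := if h : S.Nonempty then S.min' h else (d' : ℤ)

/-- bid price `b(X) = sup supp(X⁺)` (convention `sup supp(0) = −d'`). -/
noncomputable def bC (d' : ℕ) (X : EC) : ℤ := supD d' (suppC d' X.1)

/-- ask price `a(X) = inf supp(X⁻)` (convention `inf supp(0) = d'`). -/
noncomputable def aC (d' : ℕ) (X : EC) : ℤ := infD d' (suppC d' X.2)

/-- `E^m`: configurations supported in `I` with nonempty buy and sell sides. -/
def Em (d' : ℕ) : Set EC :=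
  {X | suppIn d' X.1 ∧ suppIn d' X.2 ∧ X.1 ≠ 0 ∧ X.2 ≠ 0}

/-- `L⁰`: elements of `E^m` with `a(X) > b(X)`. -/
def L0 (d' : ℕ) : Set EC := {X | X ∈ Em d' ∧ bC d' X < aC d' X}

/-- `p̂`: the parity of `p` (`0` if `p` is even, `1` if `p` is odd). -/
def hatp (p : ℤ) : ℤ := p % 2

/-- `⌈p/2⌉` for an integer `p`. -/
def ceilHalf (p : ℤ) : ℤ := Int.fdiv (p + 1) 2

/-- `[p,p'] = ⌈p'/2⌉ − ⌈p/2⌉`. -/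
def shift (p p' : ℤ) : ℤ := ceilHalf p' - ceilHalf p

/-- The centred state space `L^m`. -/
def Lm (d' : ℕ) : Set (EC × ℤ) :=
  {Xp | Xp.1 ∈ Em d' ∧ bC d' Xp.1 < aC d' Xp.1 ∧
    aC d' Xp.1 + bC d' Xp.1 + hatp Xp.2 = 0}

/-- The truncating shift `σ_i` on a single vector. -/
def sigmaV (d' : ℕ) (i : ℤ) (Y : VecC) : VecC := fun j =>
  if min (d' : ℤ) ((d' : ℤ) - i) < j ∨ j < max (-(d' : ℤ)) (-(d' : ℤ) - i) then 0
  else Y (j + i)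

/-- The truncating shift `σ_i` acting componentwise on pairs. -/
def sigmaP (d' : ℕ) (i : ℤ) (Y : EC) : EC := (sigmaV d' i Y.1, sigmaV d' i Y.2)

/-- The centering operator `J(Y,p) = (σ_{[p,p']}(Y), p')`, `p' = p + a(Y) + b(Y) + p̂`. -/
noncomputable def J (d' : ℕ) (Y : EC) (p : ℤ) : EC × ℤ :=
  (sigmaP d' (shift p (p + aC d' Y + bC d' Y + hatp p)) Y,
    p + aC d' Y + bC d' Y + hatp p)

/-!
The shift `[p,p']` equals `⌈(a+b)/2⌉` for `a = a(Y)`, `b = b(Y)`, so the translated best quotes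
`a - [p,p']` and `b - [p,p']` still lie in `I` because `-d' ≤ b < a ≤ d'`. The truncating shift
moves every surviving price by exactly `[p,p']` and keeps these two extremal ones, hence it
translates the ask and the bid rigidly; (ii) is then arithmetic, since
`⌈p'/2⌉ = ⌈p/2⌉ + [p,p']`.
-/

lemma ceilHalf_eq (p : ℤ) : ceilHalf p = (p + 1) / 2 := by
  rw [ceilHalf, Int.fdiv_eq_ediv_of_nonneg _ (by norm_num)]

lemma shift_centering (p a b : ℤ) : shift p (p + a + b + hatp p) = (a + b + 1) / 2 := by
  rw [shift, ceilHalf_eq, ceilHalf_eq, hatp]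
  omega

section Support

variable {d' : ℕ}

lemma mem_suppC {Z : VecC} {j : ℤ} :
    j ∈ suppC d' Z ↔ (-(d' : ℤ) ≤ j ∧ j ≤ d') ∧ 0 < Z j := by
  simp [suppC, and_assoc]

lemma mem_suppC_sigmaV {i : ℤ} {Z : VecC} {j : ℤ} :
    j ∈ suppC d' (sigmaV d' i Z) ↔ j + i ∈ suppC d' Z ∧ -(d' : ℤ) ≤ j ∧ j ≤ d' := by
  rw [mem_suppC, mem_suppC, sigmaV]
  split_ifs with h
  · constructor
    · rintro ⟨-, hpos⟩; exact absurd hpos (lt_irrefl 0)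
    · rintro ⟨⟨hi, -⟩, hj⟩; omega
  · constructor
    · rintro ⟨hj, hpos⟩; exact ⟨⟨by omega, hpos⟩, hj⟩
    · rintro ⟨⟨-, hpos⟩, hj⟩; exact ⟨hj, hpos⟩

lemma suppC_nonempty {Z : VecC} (hs : suppIn d' Z) (hz : Z ≠ 0) : (suppC d' Z).Nonempty := by
  obtain ⟨j, hj⟩ := Function.ne_iff.mp hz
  exact ⟨j, mem_suppC.mpr ⟨hs j hj, Nat.pos_of_ne_zero hj⟩⟩

lemma isLeast_aC {X : EC} (hs : suppIn d' X.2) (hz : X.2 ≠ 0) :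
    IsLeast (suppC d' X.2 : Set ℤ) (aC d' X) := by
  have hne := suppC_nonempty hs hz
  rw [aC, infD, dif_pos hne]
  exact Finset.isLeast_min' _ hne

lemma isGreatest_bC {X : EC} (hs : suppIn d' X.1) (hz : X.1 ≠ 0) :
    IsGreatest (suppC d' X.1 : Set ℤ) (bC d' X) := by
  have hne := suppC_nonempty hs hz
  rw [bC, supD, dif_pos hne]
  exact Finset.isGreatest_max' _ hne

lemma aC_eq_of_isLeast {X : EC} {m : ℤ} (h : IsLeast (suppC d' X.2 : Set ℤ) m) :
    aC d' X = m := by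
  have hne : (suppC d' X.2).Nonempty := ⟨m, h.1⟩
  rw [aC, infD, dif_pos hne]
  exact (Finset.isLeast_min' _ hne).unique h

lemma bC_eq_of_isGreatest {X : EC} {m : ℤ} (h : IsGreatest (suppC d' X.1 : Set ℤ) m) :
    bC d' X = m := by
  have hne : (suppC d' X.1).Nonempty := ⟨m, h.1⟩
  rw [bC, supD, dif_pos hne]
  exact (Finset.isGreatest_max' _ hne).unique h

lemma isLeast_suppC_sigmaV {i m : ℤ} {Z : VecC} (h : IsLeast (suppC d' Z : Set ℤ) m)
    (hlo : -(d' : ℤ) ≤ m - i) (hhi : m - i ≤ d') :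
    IsLeast (suppC d' (sigmaV d' i Z) : Set ℤ) (m - i) := by
  refine ⟨mem_suppC_sigmaV.mpr ⟨by simpa using h.1, hlo, hhi⟩, fun j hj => ?_⟩
  have := h.2 (mem_suppC_sigmaV.mp hj).1
  omega

lemma isGreatest_suppC_sigmaV {i m : ℤ} {Z : VecC} (h : IsGreatest (suppC d' Z : Set ℤ) m)
    (hlo : -(d' : ℤ) ≤ m - i) (hhi : m - i ≤ d') :
    IsGreatest (suppC d' (sigmaV d' i Z) : Set ℤ) (m - i) := by
  refine ⟨mem_suppC_sigmaV.mpr ⟨by simpa using h.1, hlo, hhi⟩, fun j hj => ?_⟩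
  have := h.2 (mem_suppC_sigmaV.mp hj).1
  omega

end Support

theorem J_properties_general (d' : ℕ) :
    ∀ Y ∈ L0 d', ∀ p : ℤ,
      aC d' (J d' Y p).1 = aC d' Y - shift p (J d' Y p).2 ∧
      bC d' (J d' Y p).1 = bC d' Y - shift p (J d' Y p).2 ∧
      aC d' (J d' Y p).1 + bC d' (J d' Y p).1 + 2 * ceilHalf (J d' Y p).2 =
        aC d' Y + bC d' Y + 2 * ceilHalf p := by
  rintro Y ⟨⟨hs1, hs2, hz1, hz2⟩, hba⟩ p
  have hask := isLeast_aC hs2 hz2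
  have hbid := isGreatest_bC hs1 hz1
  obtain ⟨⟨ha_lo, ha_hi⟩, -⟩ := mem_suppC.mp hask.1
  obtain ⟨⟨hb_lo, hb_hi⟩, -⟩ := mem_suppC.mp hbid.1
  have hshift : shift p (J d' Y p).2 = (aC d' Y + bC d' Y + 1) / 2 := shift_centering _ _ _
  have hA : aC d' (J d' Y p).1 = aC d' Y - shift p (J d' Y p).2 :=
    aC_eq_of_isLeast <| isLeast_suppC_sigmaV (i := shift p (J d' Y p).2) hask
      (by rw [hshift]; omega) (by rw [hshift]; omega)
  have hB : bC d' (J d' Y p).1 = bC d' Y - shift p (J d' Y p).2 :=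
    bC_eq_of_isGreatest <| isGreatest_suppC_sigmaV (i := shift p (J d' Y p).2) hbid
      (by rw [hshift]; omega) (by rw [hshift]; omega)
  refine ⟨hA, hB, ?_⟩
  rw [hA, hB, shift]
  ring

/-- Lemma D.2 of Cont–Degond–Xuan: properties of the centering
operator: with `(X,p') = J(Y,p)`, (i) `inf supp(X⁻) = inf supp(Y⁻) − [p,p']` and
`sup supp(X⁺) = sup supp(Y⁺) − [p,p']`; (ii)
`inf supp(X⁻) + sup supp(X⁺) + 2⌈p'/2⌉ = inf supp(Y⁻) + sup supp(Y⁺) + 2⌈p/2⌉`. -/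
theorem J_properties (d' : ℕ) (hd' : 1 ≤ d') :
    ∀ Y ∈ L0 d', ∀ p : ℤ,
      aC d' (J d' Y p).1 = aC d' Y - shift p (J d' Y p).2 ∧
      bC d' (J d' Y p).1 = bC d' Y - shift p (J d' Y p).2 ∧
      aC d' (J d' Y p).1 + bC d' (J d' Y p).1 + 2 * ceilHalf (J d' Y p).2 =
        aC d' Y + bC d' Y + 2 * ceilHalf p :=
  J_properties_general d'

end COB
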